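/- In the number field ℓ = ℚ[x]/(x⁴ + 2x² − 19), with α the image of x, the element π_w = (α² + α)/2 is an algebraic integer, and there exists a unit u of the ring of integers of ℓ such that π_w² = α²·u. (Thus π_w is a uniformizer for the ramified place of ℓ lying over the prime (β) of ℚ(√5), where β = −1 + 2√5 corresponds to α² in ℓ.) -/

import Mathlib

/-!
Write `π_w = α η` with `η = (α + 1) / 2`. Substituting `α = 2η - 1` into `x⁴ + 2x² - 19` gives
`16 (η⁴ - 2η³ + 2η² - η - 1)`, so `η` is a root of a monic integer polynomial with constant
term `-1`: it is an algebraic integer whose inverse is one as well. Hence `π_w` is integral and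
`π_w² = α² η²` with `u = η²` a unit.
-/

open Polynomial

/-- The quartic number field `ℓ = ℚ[x]/(x⁴ + 2x² - 19)`. -/
abbrev ell : Type := AdjoinRoot (X ^ 4 + 2 * X ^ 2 - 19 : ℚ[X])

/-- `α`, the image of `x` in `ℓ = ℚ[x]/(x⁴ + 2x² - 19)`; it is a square root of
`β = -1 + 2√5`. -/
noncomputable def alpha : ell := AdjoinRoot.root (X ^ 4 + 2 * X ^ 2 - 19 : ℚ[X])

theorem IsIntegral.inv_of_isUnit_coeff_zero {R K : Type*} [CommRing R] [Field K] [Algebra R K]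
    {x : K} {p : R[X]} (hp : p.Monic) (hx : aeval x p = 0) (h0 : IsUnit (p.coeff 0)) :
    IsIntegral R x⁻¹ := by
  obtain ⟨c, hc⟩ := h0
  have hx_mul : x * aeval x (-C (↑c⁻¹ : R) * p.divX) = 1 := by
    have hsplit := congrArg (aeval x) (X_mul_divX_add p)
    rw [hx, map_add, map_mul, aeval_X, aeval_C, ← hc] at hsplit
    calc x * aeval x (-C (↑c⁻¹ : R) * p.divX)
        = -algebraMap R K ↑c⁻¹ * (x * aeval x p.divX) := by
          simp only [map_mul, map_neg, aeval_C]; ring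
      _ = algebraMap R K (↑c⁻¹ * ↑c) := by rw [map_mul, eq_neg_of_add_eq_zero_left hsplit]; ring
      _ = 1 := by rw [Units.inv_mul, map_one]
  rw [inv_eq_of_mul_eq_one_right hx_mul]
  exact adjoin_le_integralClosure ⟨p, hp, hx⟩ (aeval_mem_adjoin_singleton R x)

theorem alpha_pow_four_add_two_mul_sq : alpha ^ 4 + 2 * alpha ^ 2 = 19 := by
  have h := AdjoinRoot.eval₂_root (X ^ 4 + 2 * X ^ 2 - 19 : ℚ[X])
  simp only [eval₂_sub, eval₂_add, eval₂_X_pow, eval₂_mul, eval₂_ofNat] at h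
  exact sub_eq_zero.mp h

theorem isIntegral_alpha : IsIntegral ℤ alpha :=
  ⟨X ^ 4 + 2 * X ^ 2 - 19, by monicity!, by
    rw [← aeval_def]
    simp only [map_sub, map_add, map_mul, map_pow, aeval_X, map_ofNat]
    exact sub_eq_zero.mpr alpha_pow_four_add_two_mul_sq⟩

section

variable [Fact (Irreducible (X ^ 4 + 2 * X ^ 2 - 19 : ℚ[X]))]

theorem aeval_half_alpha_add_one :
    aeval ((alpha + 1) / 2) (X ^ 4 - 2 * X ^ 3 + 2 * X ^ 2 - X - 1 : ℤ[X]) = 0 := by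
  simp only [map_sub, map_add, map_mul, map_pow, aeval_X, map_ofNat, map_one]
  linear_combination alpha_pow_four_add_two_mul_sq / 16

theorem isIntegral_half_alpha_add_one : IsIntegral ℤ ((alpha + 1) / 2) :=
  ⟨_, by monicity!, aeval_half_alpha_add_one⟩

theorem isIntegral_half_alpha_add_one_inv : IsIntegral ℤ ((alpha + 1) / 2)⁻¹ :=
  .inv_of_isUnit_coeff_zero (by monicity!) aeval_half_alpha_add_one
    (by simp [coeff_zero_eq_eval_zero])

theorem half_alpha_add_one_ne_zero : (alpha + 1) / 2 ≠ 0 := by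
  intro h
  simpa [h] using aeval_half_alpha_add_one

end

/-- In `ℓ = ℚ[x]/(x⁴ + 2x² - 19)`, the element `π_w = (√β + β)/2 = (α + α²)/2` is an
algebraic integer, and `π_w² = α² u = β u` for some unit `u` of the ring of integers of `ℓ`
(so that `π_w` is a uniformizer for the ramified place of `ℓ` over the prime `(β)` of
`ℚ(√5)`). -/
theorem stmt_17 [Fact (Irreducible (X ^ 4 + 2 * X ^ 2 - 19 : ℚ[X]))] :
    IsIntegral ℤ ((alpha ^ 2 + alpha) / 2) ∧
    ∃ u : ell, u ≠ 0 ∧ IsIntegral ℤ u ∧ IsIntegral ℤ u⁻¹ ∧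
      ((alpha ^ 2 + alpha) / 2) ^ 2 = alpha ^ 2 * u := by
  have hpi : (alpha ^ 2 + alpha) / 2 = alpha * ((alpha + 1) / 2) := by ring
  refine ⟨hpi ▸ isIntegral_alpha.mul isIntegral_half_alpha_add_one, ((alpha + 1) / 2) ^ 2,
    pow_ne_zero 2 half_alpha_add_one_ne_zero, isIntegral_half_alpha_add_one.pow 2,
    inv_pow ((alpha + 1) / 2) 2 ▸ isIntegral_half_alpha_add_one_inv.pow 2, by rw [hpi]; ring⟩
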